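/- Let d ≥ 1, let L₁ and L₂ be bounded self-adjoint operators on ℓ²(ℤ^d; ℂ), and let N : ℂ → ℂ satisfy N(0) = 0, |N(z₁) − N(z₂)| ≤ C(max(|z₁|, |z₂|)) |z₁ − z₂| with C : [0,∞) → [0,∞) increasing, and conj(z)·N(z) ∈ ℝ for all z. Let u, v ∈ C¹(ℝ; ℓ²(ℤ^d)) be the unique global solutions of i u′ = L₁ u + N∘u, u(0) = f, and i v′ = L₂ v + N∘v, v(0) = g. If ‖f‖_{ℓ²} ≤ M, then there is a constant C₀ > 0 depending only on M, ‖g‖_{ℓ²} and the function C such that for all t ≥ 0: ‖u(t) − v(t)‖_{ℓ²} ≤ e^{C₀ t} ( ‖f − g‖_{ℓ²} + t ‖L₁ − L₂‖_{op} ‖g‖_{ℓ²} ). -/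

import Mathlib

open scoped BigOperators

noncomputable section

/-- ℓ²(ℤ^d; ℂ): square-summable complex sequences indexed by ℤ^d. -/
abbrev SeqD (d : ℕ) := lp (fun _ : Fin d → ℤ => ℂ) 2

/-- `u : ℝ → ℓ²(ℤ^d)` is a global C¹ solution of `i u' = L u + N ∘ u` with `u 0 = f`,
where the nonlinearity `N` is applied componentwise. -/
def IsSol {d : ℕ} (L : SeqD d →L[ℂ] SeqD d) (N : ℂ → ℂ) (f : SeqD d)
    (u : ℝ → SeqD d) : Prop :=
  ContDiff ℝ 1 u ∧ u 0 = f ∧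
    ∀ t : ℝ, ∀ n : Fin d → ℤ,
      Complex.I * (deriv u t) n = (L (u t)) n + N ((u t) n)

/- ### Auxiliary lemmas -/

lemma comp_re {a b c : ℂ} (h : Complex.I * b = c) : (a * b).re = (a * c).im := by
  have h3 : ∀ z : ℂ, (Complex.I * z).im = z.re := fun z => by simp [Complex.mul_im]
  have h2 : (Complex.I * (a * b)).im = (a * c).im := by rw [mul_left_comm, h]
  rw [h3] at h2; exact h2

lemma im_inner_self_eq_zero {d : ℕ} {L : SeqD d →L[ℂ] SeqD d} (hL : IsSelfAdjoint L)
    (x : SeqD d) : (inner ℂ x (L x) : ℂ).im = 0 := by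
  have h := hL.isSymmetric x x
  simp only [ContinuousLinearMap.coe_coe] at h
  have h2 : (starRingEnd ℂ) (inner ℂ x (L x) : ℂ) = (inner ℂ x (L x) : ℂ) := by
    rw [inner_conj_symm]; exact h
  exact Complex.conj_eq_iff_im.mp h2

lemma key_re {d : ℕ} {L : SeqD d →L[ℂ] SeqD d} (hL : IsSelfAdjoint L) {N : ℂ → ℂ}
    (hNreal : ∀ z : ℂ, ((starRingEnd ℂ) z * N z).im = 0) (x x' : SeqD d)
    (heq : ∀ n, Complex.I * x' n = (L x) n + N (x n)) :
    (inner ℂ x x' : ℂ).re = 0 := by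
  have h1 : (inner ℂ x x' : ℂ).re = ∑' n, ((inner ℂ (x n) (x' n) : ℂ)).re := by
    rw [lp.inner_eq_tsum]
    exact ((lp.summable_inner x x').hasSum.mapL Complex.reCLM).tsum_eq.symm
  have h2 : ∀ n, ((inner ℂ (x n) (x' n) : ℂ)).re = ((inner ℂ (x n) ((L x) n) : ℂ)).im := by
    intro n
    rw [RCLike.inner_apply, RCLike.inner_apply]
    have h := comp_re (a := (starRingEnd ℂ) (x n)) (heq n)
    rw [mul_add] at h
    rw [mul_comm (x' n), mul_comm ((L x) n), h, Complex.add_im, hNreal (x n), add_zero]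
  have h3 : ∑' n, ((inner ℂ (x n) ((L x) n) : ℂ)).im = (inner ℂ x (L x) : ℂ).im := by
    rw [lp.inner_eq_tsum]
    exact ((lp.summable_inner x (L x)).hasSum.mapL Complex.imCLM).tsum_eq
  rw [h1, tsum_congr h2, h3, im_inner_self_eq_zero hL]

lemma hasDerivAt_psi {d : ℕ} {u : ℝ → SeqD d} (hu : Differentiable ℝ u) (s : ℝ) :
    HasDerivAt (fun τ => (inner ℂ (u τ) (u τ) : ℂ).re)
      (2 * (inner ℂ (u s) (deriv u s) : ℂ).re) s := by
  have h1 : HasDerivAt (fun τ => (inner ℂ (u τ) (u τ) : ℂ))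
      ((inner ℂ (u s) (deriv u s) : ℂ) + inner ℂ (deriv u s) (u s)) s :=
    HasDerivAt.inner ℂ (hu s).hasDerivAt (hu s).hasDerivAt
  have h2 := Complex.reCLM.hasFDerivAt.comp_hasDerivAt s h1
  have h2' : HasDerivAt (fun τ => (inner ℂ (u τ) (u τ) : ℂ).re)
      (((inner ℂ (u s) (deriv u s) : ℂ) + inner ℂ (deriv u s) (u s)).re) s := h2
  have h3 : (((inner ℂ (u s) (deriv u s) : ℂ) + inner ℂ (deriv u s) (u s)).re)
      = 2 * (inner ℂ (u s) (deriv u s) : ℂ).re := by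
    have h4 : (inner ℂ (deriv u s) (u s) : ℂ) = (starRingEnd ℂ) (inner ℂ (u s) (deriv u s) : ℂ) :=
      (inner_conj_symm _ _).symm
    rw [Complex.add_re, h4, Complex.conj_re]; ring
  rw [h3] at h2'; exact h2'

lemma norm_sol_const {d : ℕ} {L : SeqD d →L[ℂ] SeqD d} (hL : IsSelfAdjoint L) {N : ℂ → ℂ}
    (hNreal : ∀ z : ℂ, ((starRingEnd ℂ) z * N z).im = 0) {f : SeqD d} {u : ℝ → SeqD d}
    (hu : IsSol L N f u) : ∀ t : ℝ, ‖u t‖ = ‖f‖ := by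
  obtain ⟨hreg, h0, heq⟩ := hu
  have hdiff : Differentiable ℝ u := hreg.differentiable one_ne_zero
  set F : ℝ → ℝ := fun s => (inner ℂ (u s) (u s) : ℂ).re with hFdef
  have hF' : ∀ s, HasDerivAt F 0 s := by
    intro s
    have h := hasDerivAt_psi hdiff s
    rwa [key_re hL hNreal (u s) (deriv u s) (heq s), mul_zero] at h
  have hconst : ∀ s r : ℝ, F s = F r :=
    is_const_of_deriv_eq_zero (fun s => (hF' s).differentiableAt) (fun s => (hF' s).deriv)
  intro t
  have hsq : ‖u t‖ ^ 2 = ‖f‖ ^ 2 := by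
    calc ‖u t‖ ^ 2 = F t := (inner_self_eq_norm_sq (𝕜 := ℂ) (u t)).symm
    _ = F 0 := hconst t 0
    _ = ‖f‖ ^ 2 := by rw [hFdef]; simp only [h0]; exact inner_self_eq_norm_sq (𝕜 := ℂ) f
  calc ‖u t‖ = Real.sqrt (‖u t‖ ^ 2) := (Real.sqrt_sq (norm_nonneg _)).symm
  _ = Real.sqrt (‖f‖ ^ 2) := by rw [hsq]
  _ = ‖f‖ := Real.sqrt_sq (norm_nonneg _)

lemma re_inner_bound {d : ℕ} {L₁ L₂ : SeqD d →L[ℂ] SeqD d} (hL₁ : IsSelfAdjoint L₁)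
    {N : ℂ → ℂ} {K' : ℝ}
    (x x' y z : SeqD d)
    (hcomp : ∀ n, Complex.I * x' n = (L₁ x) n + ((L₁ - L₂) y) n + (N (z n) - N ((z - x) n)))
    (hNbd : ∀ n, ‖N (z n) - N ((z - x) n)‖ ≤ K' * ‖x n‖) :
    (inner ℂ x x' : ℂ).re ≤ K' * ‖x‖ ^ 2 + (‖L₁ - L₂‖ * ‖y‖) * ‖x‖ := by
  set a : (Fin d → ℤ) → ℝ := fun n => ((inner ℂ (x n) ((L₁ x) n) : ℂ)).im with ha
  set b : (Fin d → ℤ) → ℝ := fun n => ((inner ℂ (x n) (((L₁ - L₂) y) n) : ℂ)).im with hb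
  set c : (Fin d → ℤ) → ℝ :=
    fun n => ((starRingEnd ℂ) (x n) * (N (z n) - N ((z - x) n))).im with hc
  have sa : Summable a := ((lp.summable_inner x (L₁ x)).hasSum.mapL Complex.imCLM).summable
  have sb : Summable b := ((lp.summable_inner x ((L₁ - L₂) y)).hasSum.mapL Complex.imCLM).summable
  have hs2 : Summable fun n => ‖x n‖ ^ 2 := by
    have h := ((lp.summable_inner x x).hasSum.mapL Complex.reCLM).summable
    refine h.congr fun n => ?_
    exact inner_self_eq_norm_sq (𝕜 := ℂ) (x n)
  have hcbd : ∀ n, ‖c n‖ ≤ K' * ‖x n‖ ^ 2 := by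
    intro n
    calc ‖c n‖ ≤ ‖(starRingEnd ℂ) (x n) * (N (z n) - N ((z - x) n))‖ := by
            rw [hc]; exact Complex.abs_im_le_norm _
    _ = ‖x n‖ * ‖N (z n) - N ((z - x) n)‖ := by rw [norm_mul, RCLike.norm_conj]
    _ ≤ ‖x n‖ * (K' * ‖x n‖) := mul_le_mul_of_nonneg_left (hNbd n) (norm_nonneg _)
    _ = K' * ‖x n‖ ^ 2 := by ring
  have sc : Summable c := Summable.of_norm_bounded (hs2.mul_left K') hcbd
  have hpt : ∀ n, ((inner ℂ (x n) (x' n) : ℂ)).re = a n + b n + c n := by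
    intro n
    rw [RCLike.inner_apply]
    have h := comp_re (a := (starRingEnd ℂ) (x n)) (hcomp n)
    rw [mul_add, mul_add, Complex.add_im, Complex.add_im] at h
    rw [mul_comm (x' n), h, ha, hb]
    simp only [RCLike.inner_apply, hc, mul_comm]
  have h1 : (inner ℂ x x' : ℂ).re = ∑' n, ((inner ℂ (x n) (x' n) : ℂ)).re := by
    rw [lp.inner_eq_tsum]
    exact ((lp.summable_inner x x').hasSum.mapL Complex.reCLM).tsum_eq.symm
  rw [h1, tsum_congr hpt, Summable.tsum_add (sa.add sb) sc, Summable.tsum_add sa sb]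
  have hT1 : ∑' n, a n = 0 := by
    have he : ∑' n, a n = (inner ℂ x (L₁ x) : ℂ).im := by
      rw [lp.inner_eq_tsum]
      exact ((lp.summable_inner x (L₁ x)).hasSum.mapL Complex.imCLM).tsum_eq
    rw [he]; exact im_inner_self_eq_zero hL₁ x
  have hT2 : ∑' n, b n ≤ ‖L₁ - L₂‖ * ‖y‖ * ‖x‖ := by
    have he : ∑' n, b n = (inner ℂ x ((L₁ - L₂) y) : ℂ).im := by
      rw [lp.inner_eq_tsum]
      exact ((lp.summable_inner x ((L₁ - L₂) y)).hasSum.mapL Complex.imCLM).tsum_eq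
    rw [he]
    calc (inner ℂ x ((L₁ - L₂) y) : ℂ).im ≤ ‖(inner ℂ x ((L₁ - L₂) y) : ℂ)‖ := by
          exact (le_abs_self _).trans (Complex.abs_im_le_norm _)
    _ ≤ ‖x‖ * ‖(L₁ - L₂) y‖ := norm_inner_le_norm _ _
    _ ≤ ‖x‖ * (‖L₁ - L₂‖ * ‖y‖) :=
          mul_le_mul_of_nonneg_left (ContinuousLinearMap.le_opNorm _ _) (norm_nonneg _)
    _ = ‖L₁ - L₂‖ * ‖y‖ * ‖x‖ := by ring
  have hT3 : ∑' n, c n ≤ K' * ‖x‖ ^ 2 := by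
    have hnorm : ∑' n, ‖x n‖ ^ 2 = ‖x‖ ^ 2 := by
      have h5 : ∑' n, ((inner ℂ (x n) (x n) : ℂ)).re = (inner ℂ x x : ℂ).re := by
        rw [lp.inner_eq_tsum]
        exact ((lp.summable_inner x x).hasSum.mapL Complex.reCLM).tsum_eq
      have h6 : ∑' n, ‖x n‖ ^ 2 = ∑' n, ((inner ℂ (x n) (x n) : ℂ)).re :=
        tsum_congr fun n => (inner_self_eq_norm_sq (𝕜 := ℂ) (x n)).symm
      rw [h6, h5]
      exact inner_self_eq_norm_sq (𝕜 := ℂ) x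
    calc ∑' n, c n ≤ ∑' n, K' * ‖x n‖ ^ 2 := by
          refine Summable.tsum_le_tsum (fun n => ?_) sc (hs2.mul_left K')
          exact (le_abs_self _).trans (hcbd n)
    _ = K' * ∑' n, ‖x n‖ ^ 2 := tsum_mul_left
    _ = K' * ‖x‖ ^ 2 := by rw [hnorm]
  linarith

open Set Filter in
lemma gronwall_norm {d : ℕ} {w : ℝ → SeqD d} (hw : Differentiable ℝ w)
    {K ε : ℝ} (hK : 0 < K) (hε : 0 ≤ ε)
    (hb : ∀ s, (inner ℂ (w s) (deriv w s) : ℂ).re ≤ K * ‖w s‖ ^ 2 + ε * ‖w s‖)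
    {t : ℝ} (ht : 0 ≤ t) :
    ‖w t‖ ≤ Real.exp (K * t) * (‖w 0‖ + t * ε) := by
  set ψ : ℝ → ℝ := fun s => (inner ℂ (w s) (w s) : ℂ).re with hψdef
  have hψeq : ∀ s, ψ s = ‖w s‖ ^ 2 := fun s => inner_self_eq_norm_sq (𝕜 := ℂ) _
  have hψ' : ∀ s, HasDerivAt ψ (2 * (inner ℂ (w s) (deriv w s) : ℂ).re) s := hasDerivAt_psi hw
  have main : ∀ η : ℝ, 0 < η → ‖w t‖ ≤ gronwallBound (‖w 0‖ + η) K ε t := by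
    intro η hη
    set φ : ℝ → ℝ := fun s => Real.sqrt (ψ s + η ^ 2) with hφdef
    have hpos : ∀ s, 0 < ψ s + η ^ 2 := fun s => by
      rw [hψeq]; positivity
    have hφpos : ∀ s, 0 < φ s := fun s => Real.sqrt_pos.2 (hpos s)
    have hφ' : ∀ s, HasDerivAt φ
        ((2 * (inner ℂ (w s) (deriv w s) : ℂ).re) / (2 * φ s)) s := fun s =>
      ((hψ' s).add_const (η ^ 2)).sqrt (ne_of_gt (hpos s))
    have hwle : ∀ s, ‖w s‖ ≤ φ s := by
      intro s
      have h1 : ‖w s‖ = Real.sqrt (ψ s) := by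
        rw [hψeq]; exact (Real.sqrt_sq (norm_nonneg _)).symm
      rw [h1]
      exact Real.sqrt_le_sqrt (by nlinarith [sq_nonneg η])
    have hbound : ∀ s ∈ Set.Ico 0 t,
        (2 * (inner ℂ (w s) (deriv w s) : ℂ).re) / (2 * φ s) ≤ K * φ s + ε := by
      intro s _
      rw [div_le_iff₀ (mul_pos two_pos (hφpos s))]
      have h1 := hb s
      have h2 := hwle s
      have h3 := norm_nonneg (w s)
      have h4 := (hφpos s).le
      have hsq : ‖w s‖ ^ 2 ≤ φ s ^ 2 := by nlinarith
      nlinarith [mul_le_mul_of_nonneg_left hsq hK.le, mul_le_mul_of_nonneg_left h2 hε]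
    have hcont : ContinuousOn φ (Set.Icc 0 t) :=
      fun s _ => ((hφ' s).continuousAt.continuousWithinAt)
    have hliminf : ∀ s ∈ Set.Ico 0 t, ∀ r,
        (2 * (inner ℂ (w s) (deriv w s) : ℂ).re) / (2 * φ s) < r →
        ∃ᶠ z in nhdsWithin s (Set.Ioi s), (z - s)⁻¹ * (φ z - φ s) < r := by
      intro s _ r hr
      have hT : Filter.Tendsto (slope φ s) (nhdsWithin s {s}ᶜ)
          (nhds ((2 * (inner ℂ (w s) (deriv w s) : ℂ).re) / (2 * φ s))) :=
        hasDerivAt_iff_tendsto_slope.mp (hφ' s)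
      have hT2 : Filter.Tendsto (slope φ s) (nhdsWithin s (Set.Ioi s))
          (nhds ((2 * (inner ℂ (w s) (deriv w s) : ℂ).re) / (2 * φ s))) :=
        hT.mono_left (nhdsWithin_mono s fun z hz => Set.mem_compl_singleton_iff.mpr (ne_of_gt hz))
      have hev := hT2.eventually (gt_mem_nhds hr)
      refine hev.frequently.mono fun z hz => ?_
      rwa [slope_def_field, div_eq_inv_mul] at hz
    have hstart : φ 0 ≤ ‖w 0‖ + η := by
      have h1 : ψ 0 + η ^ 2 ≤ (‖w 0‖ + η) ^ 2 := by
        rw [hψeq]; nlinarith [norm_nonneg (w 0)]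
      calc φ 0 ≤ Real.sqrt ((‖w 0‖ + η) ^ 2) := Real.sqrt_le_sqrt h1
      _ = ‖w 0‖ + η := Real.sqrt_sq (by positivity)
    have happ := le_gronwallBound_of_liminf_deriv_right_le hcont hliminf hstart hbound t
      (Set.right_mem_Icc.2 ht)
    rw [sub_zero] at happ
    exact (hwle t).trans happ
  have hKne : K ≠ 0 := ne_of_gt hK
  have hE : 0 < Real.exp (K * t) := Real.exp_pos _
  have hexp1 : Real.exp (K * t) - 1 ≤ K * t * Real.exp (K * t) := by
    have h5 : 1 - K * t ≤ Real.exp (-(K * t)) := by linarith [Real.add_one_le_exp (-(K * t))]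
    have h6 : Real.exp (-(K * t)) * Real.exp (K * t) = 1 := by
      rw [← Real.exp_add]; simp
    nlinarith [mul_le_mul_of_nonneg_right h5 hE.le]
  have hfrac : ε / K * (Real.exp (K * t) - 1) ≤ ε * t * Real.exp (K * t) := by
    have h7 : ε / K * (Real.exp (K * t) - 1) ≤ ε / K * (K * t * Real.exp (K * t)) :=
      mul_le_mul_of_nonneg_left hexp1 (div_nonneg hε hK.le)
    have h8 : ε / K * (K * t * Real.exp (K * t)) = ε * t * Real.exp (K * t) := by
      field_simp
    linarith
  refine le_of_forall_pos_le_add fun η' hη' => ?_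
  have hmain := main (η' / Real.exp (K * t)) (by positivity)
  rw [gronwallBound_of_K_ne_0 hKne] at hmain
  have h9 : (‖w 0‖ + η' / Real.exp (K * t)) * Real.exp (K * t)
      = ‖w 0‖ * Real.exp (K * t) + η' := by
    rw [add_mul, div_mul_cancel₀ _ (ne_of_gt hE)]
  have goal_eq : Real.exp (K * t) * (‖w 0‖ + t * ε) + η'
      = ‖w 0‖ * Real.exp (K * t) + η' + ε * t * Real.exp (K * t) := by ring
  rw [goal_eq]
  linarith [hmain, hfrac, h9]

/-- Comparison of the flows generated by two bounded self-adjoint operators with the same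
componentwise nonlinearity: the constant `C₀` depends only on `M`, the size `Rg` of `‖g‖`,
and the modulus function `C`. -/
theorem flow_comparison
    (d : ℕ) (hd : 1 ≤ d)
    (N : ℂ → ℂ) (C : ℝ → ℝ)
    (hC0 : ∀ x : ℝ, 0 ≤ x → 0 ≤ C x)
    (hCmono : MonotoneOn C (Set.Ici (0 : ℝ)))
    (hN0 : N 0 = 0)
    (hNlip : ∀ z₁ z₂ : ℂ, ‖N z₁ - N z₂‖ ≤ C (max ‖z₁‖ ‖z₂‖) * ‖z₁ - z₂‖)
    (hNreal : ∀ z : ℂ, ((starRingEnd ℂ) z * N z).im = 0)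
    (M Rg : ℝ) :
    ∃ C₀ : ℝ, 0 < C₀ ∧
      ∀ (L₁ L₂ : SeqD d →L[ℂ] SeqD d), IsSelfAdjoint L₁ → IsSelfAdjoint L₂ →
        ∀ (f g : SeqD d) (u v : ℝ → SeqD d),
          IsSol L₁ N f u → IsSol L₂ N g v →
          ‖f‖ ≤ M → ‖g‖ ≤ Rg →
          ∀ t : ℝ, 0 ≤ t →
            ‖u t - v t‖ ≤ Real.exp (C₀ * t) * (‖f - g‖ + t * ‖L₁ - L₂‖ * ‖g‖) := by
  set K' : ℝ := C (max (max M Rg) 0) with hK'def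
  have hK'0 : 0 ≤ K' := hC0 _ (le_max_right _ 0)
  refine ⟨K' + 1, by linarith, ?_⟩
  intro L₁ L₂ hL₁ hL₂ f g u v hu hv hfM hgR t ht
  have hnu : ∀ s : ℝ, ‖u s‖ = ‖f‖ := norm_sol_const hL₁ hNreal hu
  have hnv : ∀ s : ℝ, ‖v s‖ = ‖g‖ := norm_sol_const hL₂ hNreal hv
  obtain ⟨hru, hu0, hequ⟩ := hu
  obtain ⟨hrv, hv0, heqv⟩ := hv
  have hud : Differentiable ℝ u := hru.differentiable one_ne_zero
  have hvd : Differentiable ℝ v := hrv.differentiable one_ne_zero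
  set w : ℝ → SeqD d := fun s => u s - v s with hwdef
  have hwd : Differentiable ℝ w := hud.sub hvd
  have hderiv : ∀ s, deriv w s = deriv u s - deriv v s := fun s =>
    ((hud s).hasDerivAt.sub (hvd s).hasDerivAt).deriv
  set ε : ℝ := ‖L₁ - L₂‖ * ‖g‖ with hεdef
  have hε : 0 ≤ ε := mul_nonneg (norm_nonneg _) (norm_nonneg _)
  have hp2 : (2 : ENNReal) ≠ 0 := by norm_num
  -- the key differential inequality
  have hb : ∀ s, (inner ℂ (w s) (deriv w s) : ℂ).re ≤ (K' + 1) * ‖w s‖ ^ 2 + ε * ‖w s‖ := by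
    intro s
    have hzx : u s - w s = v s := sub_sub_cancel _ _
    have hcomp : ∀ n, Complex.I * (deriv w s) n =
        (L₁ (w s)) n + ((L₁ - L₂) (v s)) n + (N ((u s) n) - N ((u s - w s) n)) := by
      intro n
      have e1 : (deriv w s) n = (deriv u s) n - (deriv v s) n := by
        rw [hderiv s, lp.coeFn_sub]; rfl
      have e2 : L₁ (w s) + (L₁ - L₂) (v s) = L₁ (u s) - L₂ (v s) := by
        rw [ContinuousLinearMap.sub_apply, hwdef]
        simp only [map_sub]
        abel
      have e2n : (L₁ (w s)) n + ((L₁ - L₂) (v s)) n = (L₁ (u s)) n - (L₂ (v s)) n := by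
        have h := congrArg (fun q : SeqD d => (q : (Fin d → ℤ) → ℂ) n) e2
        simpa [lp.coeFn_add, lp.coeFn_sub] using h
      have e3 : ((u s - w s) : SeqD d) n = (v s) n := by rw [hzx]
      calc Complex.I * (deriv w s) n
          = Complex.I * (deriv u s) n - Complex.I * (deriv v s) n := by rw [e1, mul_sub]
      _ = ((L₁ (u s)) n + N ((u s) n)) - ((L₂ (v s)) n + N ((v s) n)) := by
            rw [hequ s n, heqv s n]
      _ = (L₁ (w s)) n + ((L₁ - L₂) (v s)) n + (N ((u s) n) - N ((u s - w s) n)) := by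
            rw [e2n, e3]; ring
    have hNbd : ∀ n, ‖N ((u s) n) - N ((u s - w s) n)‖ ≤ K' * ‖(w s) n‖ := by
      intro n
      have e3 : ((u s - w s) : SeqD d) n = (v s) n := by rw [hzx]
      rw [e3]
      have ewn : (u s) n - (v s) n = (w s) n := by
        rw [hwdef]; simp only [lp.coeFn_sub, Pi.sub_apply]
      have hCle : C (max ‖(u s) n‖ ‖(v s) n‖) ≤ K' := by
        have hun : ‖(u s) n‖ ≤ M := by
          calc ‖(u s) n‖ ≤ ‖u s‖ := lp.norm_apply_le_norm hp2 (u s) n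
          _ = ‖f‖ := hnu s
          _ ≤ M := hfM
        have hvn : ‖(v s) n‖ ≤ Rg := by
          calc ‖(v s) n‖ ≤ ‖v s‖ := lp.norm_apply_le_norm hp2 (v s) n
          _ = ‖g‖ := hnv s
          _ ≤ Rg := hgR
        refine hCmono (Set.mem_Ici.mpr ?_) (Set.mem_Ici.mpr (le_max_right _ _)) ?_
        · exact le_trans (norm_nonneg _) (le_max_left _ _)
        · refine max_le ?_ ?_
          · exact le_trans hun (le_trans (le_max_left _ _) (le_max_left _ _))
          · exact le_trans hvn (le_trans (le_max_right _ _) (le_max_left _ _))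
      calc ‖N ((u s) n) - N ((v s) n)‖
          ≤ C (max ‖(u s) n‖ ‖(v s) n‖) * ‖(u s) n - (v s) n‖ := hNlip _ _
      _ ≤ K' * ‖(u s) n - (v s) n‖ := mul_le_mul_of_nonneg_right hCle (norm_nonneg _)
      _ = K' * ‖(w s) n‖ := by rw [ewn]
    have hmain := re_inner_bound hL₁ (w s) (deriv w s) (v s) (u s) hcomp hNbd
    have hKK : K' * ‖w s‖ ^ 2 ≤ (K' + 1) * ‖w s‖ ^ 2 :=
      mul_le_mul_of_nonneg_right (by linarith) (sq_nonneg _)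
    have hvs : ‖L₁ - L₂‖ * ‖v s‖ = ε := by rw [hnv s]
    calc (inner ℂ (w s) (deriv w s) : ℂ).re
        ≤ K' * ‖w s‖ ^ 2 + (‖L₁ - L₂‖ * ‖v s‖) * ‖w s‖ := hmain
    _ = K' * ‖w s‖ ^ 2 + ε * ‖w s‖ := by rw [hvs]
    _ ≤ (K' + 1) * ‖w s‖ ^ 2 + ε * ‖w s‖ := by linarith
  have hgr := gronwall_norm hwd (by linarith : (0:ℝ) < K' + 1) hε hb ht
  have hw0 : w 0 = f - g := by rw [hwdef]; simp only [hu0, hv0]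
  rw [hw0] at hgr
  calc ‖u t - v t‖ = ‖w t‖ := rfl
  _ ≤ Real.exp ((K' + 1) * t) * (‖f - g‖ + t * ε) := hgr
  _ = Real.exp ((K' + 1) * t) * (‖f - g‖ + t * ‖L₁ - L₂‖ * ‖g‖) := by
        rw [hεdef]; ring
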